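/- arXiv:2408.04897 — 4 statements merged into one kernel-verified Lean document; each statement's English description precedes it below -/
import Mathlib

section
/- Let m,n,s,k,c be positive integers such that s is odd or k is odd, and let Γ be a finite abelian group of order n·k·c having exactly one involution. Then there is no Γ-magic rectangle set MRS_Γ(m,n;s,k;c). -/
/-!
Summing all entries of a magic rectangle set row by row gives `(c m) • ω`, and each of the
`c m` rows has `s` filled cells, so `c m s = |Γ|`; hence `s • ∑ Γ = |Γ| • ω = 0`, and likewise
`k • ∑ Γ = 0` column by column. On the other hand, pairing every element with its negative shows
that `∑ Γ` is the sum of the elements of order dividing `2`, which is the unique involution.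
An element of order `2` is not killed by an odd multiplier.
-/

open Finset

/-- A Γ-magic rectangle set `MRS_Γ(m,n;s,k;c)` on partially filled arrays. -/
def IsPartialMRS {Γ : Type*} [AddCommGroup Γ] (m n s k c : ℕ)
    (A : Fin c → Fin m → Fin n → Option Γ) : Prop :=
  (∀ g : Γ, ∃! p : Fin c × Fin m × Fin n, A p.1 p.2.1 p.2.2 = some g) ∧
  (∀ t : Fin c, ∀ i : Fin m,
    (Finset.univ.filter fun j : Fin n => (A t i j).isSome).card = s) ∧
  (∀ t : Fin c, ∀ j : Fin n,
    (Finset.univ.filter fun i : Fin m => (A t i j).isSome).card = k) ∧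
  ∃ ω δ : Γ,
    (∀ t : Fin c, ∀ i : Fin m, (∑ j : Fin n, (A t i j).getD 0) = ω) ∧
    (∀ t : Fin c, ∀ j : Fin n, (∑ i : Fin m, (A t i j).getD 0) = δ)

/-- The number of involutions (elements of additive order 2) of `Γ`. -/
noncomputable def numInvolutions (Γ : Type*) [AddMonoid Γ] : ℕ :=
  Nat.card {g : Γ // addOrderOf g = 2}

section SumOfGroup

variable {Γ : Type*} [AddCommGroup Γ] [Fintype Γ]

lemma sum_univ_eq_sum_filter_two_nsmul_eq_zero [DecidableEq Γ] :
    ∑ g : Γ, g = ∑ g : Γ with 2 • g = 0, g := by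
  have hpairs : ∑ g : Γ with ¬2 • g = 0, g = 0 := by
    refine sum_involution (fun g _ => -g) (fun g _ => add_neg_cancel g) (fun g hg _ hneg => ?_)
      (fun g hg => ?_) (fun g _ => neg_neg g)
    · rw [mem_filter, two_nsmul, add_eq_zero_iff_neg_eq] at hg
      exact hg.2 hneg
    · simpa only [mem_filter, mem_univ, true_and, smul_neg, neg_eq_zero] using hg
  rw [← sum_filter_add_sum_filter_not univ (fun g : Γ => 2 • g = 0), hpairs, add_zero]

lemma addOrderOf_sum_univ_eq_two (h : numInvolutions Γ = 1) : addOrderOf (∑ g : Γ, g) = 2 := by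
  classical
  obtain ⟨hsub, ⟨⟨τ, hτ⟩⟩⟩ := Nat.card_eq_one_iff_unique.mp h
  have hτ0 : τ ≠ 0 := by
    rintro rfl
    simp at hτ
  have htorsion : ({g | 2 • g = 0} : Finset Γ) = {0, τ} := by
    ext g
    simp only [mem_filter, mem_univ, true_and, mem_insert, mem_singleton]
    refine ⟨fun hg => or_iff_not_imp_left.mpr fun hg0 => ?_, ?_⟩
    · exact congrArg Subtype.val (hsub.elim ⟨g, addOrderOf_eq_prime hg hg0⟩ ⟨τ, hτ⟩)
    · rintro (rfl | rfl)
      · exact nsmul_zero 2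
      · exact hτ ▸ addOrderOf_nsmul_eq_zero _
  rwa [sum_univ_eq_sum_filter_two_nsmul_eq_zero, htorsion, sum_pair hτ0.symm, zero_add]

end SumOfGroup

section Cells

variable {ι Γ : Type*} [Fintype ι] [Fintype Γ] {f : ι → Option Γ}

lemma sum_elim_eq_sum_of_existsUnique {M : Type*} [AddCommMonoid M]
    (hf : ∀ g, ∃! p, f p = some g) (φ : Γ → M) :
    ∑ p, (f p).elim 0 φ = ∑ g, φ g := by
  classical
  calc ∑ p, (f p).elim 0 φ = ∑ p, ∑ g, if f p = some g then φ g else 0 := by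
        refine sum_congr rfl fun p _ => ?_
        cases f p <;> simp
    _ = ∑ g, φ g := by
        rw [sum_comm]
        refine sum_congr rfl fun g _ => ?_
        obtain ⟨p, hp, hpu⟩ := hf g
        rw [sum_eq_single p (fun q _ hq => if_neg (hq ∘ hpu q)) (by simp), if_pos hp]

lemma card_filter_isSome_eq_card_of_existsUnique (hf : ∀ g, ∃! p, f p = some g) :
    #{p | (f p).isSome} = Fintype.card Γ := by
  rw [card_filter, Fintype.card_eq_sum_ones, ← sum_elim_eq_sum_of_existsUnique hf]
  exact sum_congr rfl fun p _ => by cases f p <;> rfl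

lemma sum_getD_eq_sum_of_existsUnique [AddCommMonoid Γ] (hf : ∀ g, ∃! p, f p = some g) :
    ∑ p, (f p).getD 0 = ∑ g, g :=
  (sum_congr rfl fun p _ => by cases f p <;> rfl).trans
    (sum_elim_eq_sum_of_existsUnique hf id)

end Cells

section Arrays

variable {M : Type*} [AddCommMonoid M] {m n c : ℕ}

lemma sum_cells_eq_of_forall_row (F : Fin c → Fin m → Fin n → M) {r : M}
    (h : ∀ t i, ∑ j, F t i j = r) :
    ∑ p : Fin c × Fin m × Fin n, F p.1 p.2.1 p.2.2 = (c * m) • r := by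
  simp only [Fintype.sum_prod_type, h, sum_const, card_univ, Fintype.card_fin, mul_smul]

lemma sum_cells_eq_of_forall_column (F : Fin c → Fin m → Fin n → M) {r : M}
    (h : ∀ t j, ∑ i, F t i j = r) :
    ∑ p : Fin c × Fin m × Fin n, F p.1 p.2.1 p.2.2 = (c * n) • r := by
  simp only [Fintype.sum_prod_type]
  rw [← sum_cells_eq_of_forall_row (fun t j i => F t i j) h]
  simp only [Fintype.sum_prod_type, sum_comm (γ := Fin m)]

end Arrays

namespace IsPartialMRS

variable {Γ : Type*} [AddCommGroup Γ] [Fintype Γ] {m n s k c : ℕ}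
  {A : Fin c → Fin m → Fin n → Option Γ}

lemma nsmul_sum_univ_eq_zero_of_row (hA : IsPartialMRS m n s k c A) : s • ∑ g : Γ, g = 0 := by
  obtain ⟨huniq, hrow, -, ω, -, hω, -⟩ := hA
  have hcard : Fintype.card Γ = (c * m) • s := by
    rw [← card_filter_isSome_eq_card_of_existsUnique huniq, card_filter]
    exact sum_cells_eq_of_forall_row _ fun t i => (card_filter _ _).symm.trans (hrow t i)
  have hsum : ∑ g : Γ, g = (c * m) • ω := by
    rw [← sum_getD_eq_sum_of_existsUnique huniq]
    exact sum_cells_eq_of_forall_row _ hω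
  rw [hsum, smul_smul, mul_comm s, ← smul_eq_mul, ← hcard, card_nsmul_eq_zero]

lemma nsmul_sum_univ_eq_zero_of_column (hA : IsPartialMRS m n s k c A) :
    k • ∑ g : Γ, g = 0 := by
  obtain ⟨huniq, -, hcol, -, δ, -, hδ⟩ := hA
  have hcard : Fintype.card Γ = (c * n) • k := by
    rw [← card_filter_isSome_eq_card_of_existsUnique huniq, card_filter]
    exact sum_cells_eq_of_forall_column _ fun t j => (card_filter _ _).symm.trans (hcol t j)
  have hsum : ∑ g : Γ, g = (c * n) • δ := by
    rw [← sum_getD_eq_sum_of_existsUnique huniq]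
    exact sum_cells_eq_of_forall_column _ hδ
  rw [hsum, smul_smul, mul_comm k, ← smul_eq_mul, ← hcard, card_nsmul_eq_zero]

end IsPartialMRS

theorem stmt3_general (m n s k c : ℕ) (hodd : Odd s ∨ Odd k)
    (Γ : Type*) [AddCommGroup Γ] [Fintype Γ]
    (hinv : numInvolutions Γ = 1) :
    ¬ ∃ A : Fin c → Fin m → Fin n → Option Γ, IsPartialMRS m n s k c A := by
  rintro ⟨A, hA⟩
  have horder := addOrderOf_sum_univ_eq_two hinv
  rcases hodd with hs | hk
  · exact hs.not_two_dvd_nat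
      (horder ▸ addOrderOf_dvd_of_nsmul_eq_zero hA.nsmul_sum_univ_eq_zero_of_row)
  · exact hk.not_two_dvd_nat
      (horder ▸ addOrderOf_dvd_of_nsmul_eq_zero hA.nsmul_sum_univ_eq_zero_of_column)

/-- If `s` or `k` is odd and `Γ` is an abelian group of order `n·k·c` having exactly one
involution, then there is no `MRS_Γ(m,n;s,k;c)`. -/
theorem stmt3 (m n s k c : ℕ) (hm : 0 < m) (hn : 0 < n) (hs : 0 < s) (hk : 0 < k)
    (hc : 0 < c) (hodd : Odd s ∨ Odd k)
    (Γ : Type*) [AddCommGroup Γ] [Fintype Γ] (hcard : Fintype.card Γ = n * k * c)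
    (hinv : numInvolutions Γ = 1) :
    ¬ ∃ A : Fin c → Fin m → Fin n → Option Γ, IsPartialMRS m n s k c A :=
  stmt3_general m n s k c hodd Γ hinv
end

section
/- Let r ≥ 3 be an odd integer and let Γ = Z_{2r} ⊕ Z_8. Then there exists a zero-sum Γ-magic rectangle set MRS_Γ(r,8;2). -/
open Finset

/-- A zero-sum Γ-magic rectangle set `MRS_Γ(a,b;c)`. -/
def IsZeroSumFullMRS {Γ : Type*} [AddCommGroup Γ] (a b c : ℕ)
    (A : Fin c → Fin a → Fin b → Γ) : Prop :=
  (Function.Bijective fun p : Fin c × Fin a × Fin b => A p.1 p.2.1 p.2.2) ∧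
  (∀ t : Fin c, ∀ i : Fin a, (∑ j : Fin b, A t i j) = 0) ∧
  (∀ t : Fin c, ∀ j : Fin b, (∑ i : Fin a, A t i j) = 0)

/-!
By the Chinese remainder theorem `Γ ≅ (Z₂ × Z₈) × Z_r`. Label the rows of each `r × 8` array by
`y ∈ Z_r` and give the entry in row `y`, column `j` the `Z_r`-coordinate `±y`, with sign `+` on the
first four columns and `-` on the last four; rows then sum to `0`, and columns to `±∑ y = 0` since
`r` is odd. For the `Z₂ × Z₈`-coordinate take three bijections `A, B, C : Fin 2 × Fin 8 → Z₂ × Z₈`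
with zero row sums and `A + B + C = 0`: in array `t` the row labelled `1` carries `(r - 2) • A t`,
the row labelled `-1` carries `(r - 2) • B t` and all other rows carry `C t`, so columns sum to
`(r - 2) • (A + B + C) = 0`, and multiplication by the odd number `r - 2` is a bijection of
`Z₂ × Z₈`. Two entries with equal `Z_r`-coordinates lie in the same row, or in rows `y` and `-y`
under columns of opposite signs; in the second case their `Z₂ × Z₈`-coordinates differ because `C`
is injective and `A`, `B` take the same values on the first four columns.
-/

namespace IsZeroSumFullMRS

variable {Γ Γ' : Type*} [AddCommGroup Γ] [AddCommGroup Γ'] {a b c : ℕ}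

theorem map {A : Fin c → Fin a → Fin b → Γ} (hA : IsZeroSumFullMRS a b c A) (φ : Γ ≃+ Γ') :
    IsZeroSumFullMRS a b c fun t i j => φ (A t i j) := by
  obtain ⟨hbij, hrow, hcol⟩ := hA
  refine ⟨φ.bijective.comp hbij, fun t i => ?_, fun t j => ?_⟩
  · rw [← map_sum, hrow, map_zero]
  · rw [← map_sum, hcol, map_zero]

theorem of_reindex_rows {ι : Type*} [Fintype ι] (M : Fin c → ι → Fin b → Γ) (e : Fin a ≃ ι)
    (hbij : Function.Bijective fun p : Fin c × ι × Fin b => M p.1 p.2.1 p.2.2)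
    (hrow : ∀ t y, ∑ j, M t y j = 0) (hcol : ∀ t j, ∑ y, M t y j = 0) :
    IsZeroSumFullMRS a b c fun t i j => M t (e i) j := by
  refine ⟨hbij.comp (Equiv.prodCongr (.refl _) (Equiv.prodCongr e (.refl _))).bijective,
    fun t i => hrow t (e i), fun t j => ?_⟩
  rw [e.bijective.sum_comp fun y => M t y j]
  exact hcol t j

end IsZeroSumFullMRS

theorem sum_univ_eq_zero_of_odd_card {G : Type*} [AddCommGroup G] [Fintype G]
    (h : Odd (Nat.card G)) : ∑ x : G, x = 0 := by
  have hneg : ∑ x : G, x = -∑ x : G, x := by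
    rw [← sum_neg_distrib]
    exact Fintype.sum_equiv (Equiv.neg G) _ _ fun x => (neg_neg x).symm
  apply (nsmulCoprime (Nat.coprime_two_right.mpr h)).injective
  rw [nsmulCoprime_apply, nsmulCoprime_apply, smul_zero, two_nsmul]
  nth_rewrite 2 [hneg]
  exact add_neg_cancel _

section SignedRows

variable {H : Type*} {r b c : ℕ}

def IsZeroRowSumBijection [AddCommGroup H] (R : Fin c → Fin b → H) : Prop :=
  Function.Bijective (Function.uncurry R) ∧ ∀ t, ∑ j, R t j = 0

def rowArray (R₀ R₁ R : Fin c → Fin b → H) (y : ZMod r) : Fin c → Fin b → H :=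
  if y = 1 then R₀ else if y = -1 then R₁ else R

def signedArray (R₀ R₁ R : Fin c → Fin b → H) (s : Fin b → ℤˣ) (t : Fin c) (y : ZMod r)
    (j : Fin b) : H × ZMod r :=
  (rowArray R₀ R₁ R y t j, s j • y)

variable {R₀ R₁ R : Fin c → Fin b → H}

theorem IsZeroRowSumBijection.nsmul [AddCommGroup H] [Finite H] (hR : IsZeroRowSumBijection R)
    {n : ℕ} (hn : (Nat.card H).Coprime n) : IsZeroRowSumBijection fun t j => n • R t j :=
  ⟨(nsmulCoprime hn).bijective.comp hR.1, fun t => by rw [← smul_sum, hR.2, smul_zero]⟩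

theorem IsZeroRowSumBijection.rowArray [AddCommGroup H] (h₀ : IsZeroRowSumBijection R₀)
    (h₁ : IsZeroRowSumBijection R₁) (h : IsZeroRowSumBijection R) (y : ZMod r) :
    IsZeroRowSumBijection (rowArray R₀ R₁ R y) := by
  unfold _root_.rowArray
  split_ifs <;> assumption

theorem sum_rowArray [AddCommGroup H] [NeZero r] [Fact (2 < r)] (t : Fin c) (j : Fin b) :
    ∑ y : ZMod r, rowArray R₀ R₁ R y t j = R₀ t j + R₁ t j + (r - 2) • R t j := by
  have h1 : (1 : ZMod r) ∈ univ.erase (-1) := mem_erase.2 ⟨ZMod.neg_one_ne_one.symm, mem_univ _⟩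
  have hrest : ∀ y ∈ (univ.erase (-1)).erase (1 : ZMod r), rowArray R₀ R₁ R y t j = R t j := by
    intro y hy
    obtain ⟨hy1, hy2, -⟩ := by simpa only [mem_erase] using hy
    simp only [rowArray, hy1, hy2, if_false]
  rw [← add_sum_erase _ _ (mem_univ (-1)), ← add_sum_erase _ _ h1, sum_congr rfl hrest, sum_const,
    card_erase_of_mem h1, card_erase_of_mem (mem_univ _), card_univ, ZMod.card]
  simp only [rowArray, ZMod.neg_one_ne_one, if_true, if_false]
  rw [Nat.sub_sub]
  abel

theorem sign_eq_of_rowArray_eq_rowArray_neg [Fact (2 < r)] {s : Fin b → ℤˣ}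
    (hR : Function.Injective (Function.uncurry R))
    (hmix : ∀ t j t' j', R₀ t j = R₁ t' j' → s j = s j')
    {y : ZMod r} {t t' : Fin c} {j j' : Fin b}
    (h : rowArray R₀ R₁ R y t j = rowArray R₀ R₁ R (-y) t' j') : s j = s j' := by
  by_cases h1 : y = 1
  · simp only [rowArray, h1, ZMod.neg_one_ne_one, if_true, if_false] at h
    exact hmix _ _ _ _ h
  by_cases h2 : y = -1
  · simp only [rowArray, h2, neg_neg, ZMod.neg_one_ne_one, if_true, if_false] at h
    exact (hmix _ _ _ _ h.symm).symm
  have h1' : -y ≠ 1 := fun h => h2 (neg_eq_iff_eq_neg.mp h)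
  have h2' : -y ≠ -1 := fun h => h1 (neg_inj.mp h)
  simp only [rowArray, h1, h2, h1', h2', if_false] at h
  obtain ⟨-, rfl⟩ := Prod.ext_iff.mp (hR (a₁ := (t, j)) (a₂ := (t', j')) h)
  rfl

theorem signedArray_bijective [AddCommGroup H] [Fintype H] [NeZero r] [Fact (2 < r)]
    {s : Fin b → ℤˣ} (hR₀ : IsZeroRowSumBijection R₀) (hR₁ : IsZeroRowSumBijection R₁)
    (hR : IsZeroRowSumBijection R) (hmix : ∀ t j t' j', R₀ t j = R₁ t' j' → s j = s j') :
    Function.Bijective fun p : Fin c × ZMod r × Fin b => signedArray R₀ R₁ R s p.1 p.2.1 p.2.2 := by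
  have hcard : Fintype.card (Fin c × ZMod r × Fin b) = Fintype.card (H × ZMod r) := by
    rw [Fintype.card_prod, Fintype.card_prod, Fintype.card_prod, ← Fintype.card_congr
      (Equiv.ofBijective _ hR.1), Fintype.card_prod]
    ring
  refine (Fintype.bijective_iff_injective_and_card _).2 ⟨?_, hcard⟩
  rintro ⟨t, y, j⟩ ⟨t', y', j'⟩ h
  simp only [signedArray, Prod.mk.injEq] at h
  obtain ⟨hQ, hp⟩ := h
  have hs : s j = s j' := by
    by_contra hne
    rw [Int.units_ne_iff_eq_neg.mp hne, Units.neg_smul, ← smul_neg] at hp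
    obtain rfl : y' = -y := (MulAction.injective _ hp).symm
    exact hne (sign_eq_of_rowArray_eq_rowArray_neg hR.1.injective hmix hQ)
  obtain rfl : y = y' := MulAction.injective (s j) (hs ▸ hp)
  obtain ⟨rfl, rfl⟩ := Prod.ext_iff.mp
    ((hR₀.rowArray hR₁ hR y).1.injective (a₁ := (t, j)) (a₂ := (t', j')) hQ)
  rfl

theorem exists_isZeroSumFullMRS_prod_zmod [AddCommGroup H] [Fintype H] (hr : 2 < r)
    (hodd : Odd r) (s : Fin b → ℤˣ) (hs : ∑ j, (s j : ℤ) = 0)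
    (hR₀ : IsZeroRowSumBijection R₀) (hR₁ : IsZeroRowSumBijection R₁)
    (hR : IsZeroRowSumBijection R) (hcol : ∀ t j, R₀ t j + R₁ t j + (r - 2) • R t j = 0)
    (hmix : ∀ t j t' j', R₀ t j = R₁ t' j' → s j = s j') :
    ∃ A : Fin c → Fin r → Fin b → H × ZMod r, IsZeroSumFullMRS r b c A := by
  have : NeZero r := ⟨by omega⟩
  have : Fact (2 < r) := ⟨hr⟩
  refine ⟨_, .of_reindex_rows (signedArray R₀ R₁ R s) (ZMod.finEquiv r).toEquiv
    (signedArray_bijective hR₀ hR₁ hR hmix) (fun t y => ?_) (fun t j => ?_)⟩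
  · refine Prod.ext ?_ ?_
    · rw [Prod.fst_sum]
      exact (hR₀.rowArray hR₁ hR y).2 t
    · simp only [Prod.snd_sum, signedArray, Units.smul_def, ← sum_smul, hs, zero_smul,
        Prod.snd_zero]
  · refine Prod.ext ?_ ?_
    · simp only [Prod.fst_sum, signedArray, sum_rowArray, hcol, Prod.fst_zero]
    · simp only [Prod.snd_sum, signedArray, Prod.snd_zero]
      rw [← smul_sum, sum_univ_eq_zero_of_odd_card (by rwa [Nat.card_zmod]), smul_zero]

end SignedRows

-- Found by a computer search.
def tableA : Fin 2 → Fin 8 → ZMod 2 × ZMod 8 :=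
  ![![(0, 4), (1, 0), (1, 4), (0, 3), (0, 0), (0, 2), (0, 5), (0, 6)],
    ![(1, 5), (1, 1), (1, 7), (0, 7), (1, 2), (1, 3), (0, 1), (1, 6)]]

def tableB : Fin 2 → Fin 8 → ZMod 2 × ZMod 8 :=
  ![![(1, 4), (1, 5), (0, 3), (0, 7), (1, 2), (0, 2), (0, 6), (1, 3)],
    ![(1, 1), (0, 4), (1, 0), (1, 7), (1, 6), (0, 1), (0, 0), (0, 5)]]

def tableC : Fin 2 → Fin 8 → ZMod 2 × ZMod 8 :=
  ![![(1, 0), (0, 3), (1, 1), (0, 6), (1, 6), (0, 4), (0, 5), (1, 7)],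
    ![(0, 2), (1, 3), (0, 1), (1, 2), (0, 0), (1, 4), (0, 7), (1, 5)]]

def halfSign (j : Fin 8) : ℤˣ := if (j : ℕ) < 4 then 1 else -1

theorem tableA_isZeroRowSumBijection : IsZeroRowSumBijection tableA :=
  ⟨by decide, by decide⟩

theorem tableB_isZeroRowSumBijection : IsZeroRowSumBijection tableB :=
  ⟨by decide, by decide⟩

theorem tableC_isZeroRowSumBijection : IsZeroRowSumBijection tableC :=
  ⟨by decide, by decide⟩

theorem tableA_add_tableB_add_tableC : ∀ t j, tableA t j + tableB t j + tableC t j = 0 := by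
  decide

theorem halfSign_eq_of_tableA_eq_tableB :
    ∀ t j t' j', tableA t j = tableB t' j' → halfSign j = halfSign j' := by
  decide

theorem sum_halfSign : ∑ j, (halfSign j : ℤ) = 0 := by decide

theorem exists_isZeroSumFullMRS_zmod2_zmod8_prod_zmod {r : ℕ} (hr : 3 ≤ r) (hodd : Odd r) :
    ∃ A : Fin 2 → Fin r → Fin 8 → (ZMod 2 × ZMod 8) × ZMod r, IsZeroSumFullMRS r 8 2 A := by
  have hn : (Nat.card (ZMod 2 × ZMod 8)).Coprime (r - 2) := by
    rw [show Nat.card (ZMod 2 × ZMod 8) = 2 ^ 4 by simp [Nat.card_eq_fintype_card, ZMod.card]]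
    exact (Nat.coprime_two_left.2 (Nat.Odd.sub_even (by omega) hodd even_two)).pow_left 4
  refine exists_isZeroSumFullMRS_prod_zmod hr hodd halfSign sum_halfSign
    (tableA_isZeroRowSumBijection.nsmul hn) (tableB_isZeroRowSumBijection.nsmul hn)
    tableC_isZeroRowSumBijection (fun t j => ?_) (fun t j t' j' h => ?_)
  · rw [← smul_add, ← smul_add, tableA_add_tableB_add_tableC, smul_zero]
  · exact halfSign_eq_of_tableA_eq_tableB t j t' j' ((nsmulCoprime hn).injective h)

/-- Let `r ≥ 3` be an odd integer and let `Γ = Z_{2r} ⊕ Z_8`. Then there exists a zero-sum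
`MRS_Γ(r,8;2)`. -/
theorem stmt8 (r : ℕ) (hr : 3 ≤ r) (hodd : Odd r) :
    ∃ A : Fin 2 → Fin r → Fin 8 → ZMod (2 * r) × ZMod 8,
      IsZeroSumFullMRS r 8 2 A := by
  obtain ⟨A, hA⟩ := exists_isZeroSumFullMRS_zmod2_zmod8_prod_zmod hr hodd
  let crt : ZMod 2 × ZMod r ≃+ ZMod (2 * r) :=
    (ZMod.chineseRemainder (Nat.coprime_two_left.2 hodd)).symm.toAddEquiv
  let e : (ZMod 2 × ZMod 8) × ZMod r ≃+ ZMod (2 * r) × ZMod 8 :=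
    AddEquiv.prodAssoc.trans <| (AddEquiv.prodCongr (.refl _) AddEquiv.prodComm).trans <|
      AddEquiv.prodAssoc.symm.trans <| AddEquiv.prodCongr crt (.refl _)
  exact ⟨_, hA.map e⟩
end

section
/- Let r ≥ 3 be an odd integer and let Γ = Z_{2r} ⊕ Z_2 ⊕ Z_4. Then there exists a zero-sum Γ-magic rectangle set MRS_Γ(r,8;2). -/
open Finset

/-!
As `r` is odd, `ℤ_{2r} ⊕ ℤ_2 ⊕ ℤ_4 ≅ H × ℤ_r` with `H = ℤ_2 ⊕ ℤ_2 ⊕ ℤ_4` of order `16 = 2 · 8`.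
Put `(T_i(t, j), ε_j · i)` in cell `(i, j)` of array `t`, where the signs `ε_j = ±1` balance
and the `2 × 8` tables `T_i` over `H` are `D₀` in row `0`, `D₁` and `D₂` in rows `1` and `r - 1`,
and `L` resp. `-L` in the other rows below resp. above `r / 2`. Rows add up to zero because every
row of every table does and the signs balance; columns because `D₀ + D₁ + D₂ = 0`, the `L`s cancel
against the `-L`s and `∑ i = r (r - 1) / 2 ≡ 0 (mod r)`. Every table is injective, and an element
`(h, x)` with `x ≠ 0` can only come from a `+` cell of row `x` or a `-` cell of row `r - x`. These
rows carry `(D₁, D₂)` or `(±L, ∓L)`, and for such pairs the tables are chosen so that equal entries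
always lie in columns of equal sign; hence the map is injective, and bijective by counting.
-/

open Function

theorem IsZeroSumFullMRS.map_s9 {Γ Γ' : Type*} [AddCommGroup Γ] [AddCommGroup Γ'] {a b c : ℕ}
    {A : Fin c → Fin a → Fin b → Γ} (hA : IsZeroSumFullMRS a b c A) (e : Γ ≃+ Γ') :
    IsZeroSumFullMRS a b c fun t i j => e (A t i j) := by
  obtain ⟨hbij, hrow, hcol⟩ := hA
  refine ⟨e.bijective.comp hbij, fun t i => ?_, fun t j => ?_⟩
  · rw [← map_sum, hrow, map_zero]
  · rw [← map_sum, hcol, map_zero]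

def zmodTwoMulProdEquiv {r : ℕ} (hr : Odd r) (K : Type*) [AddCommGroup K] :
    ZMod (2 * r) × K ≃+ (ZMod 2 × K) × ZMod r :=
  (((ZMod.chineseRemainder (Nat.coprime_two_left.2 hr)).toAddEquiv.prodCongr
    (AddEquiv.refl K)).trans AddEquiv.prodAssoc).trans
    (((AddEquiv.refl _).prodCongr AddEquiv.prodComm).trans AddEquiv.prodAssoc.symm)

theorem Fin.eq_of_natCast_eq {r : ℕ} {i i' : Fin r}
    (h : ((i : ℕ) : ZMod r) = ((i' : ℕ) : ZMod r)) : i = i' := by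
  rw [ZMod.natCast_eq_natCast_iff', Nat.mod_eq_of_lt i.isLt, Nat.mod_eq_of_lt i'.isLt] at h
  exact Fin.ext h

theorem Fin.eq_or_add_eq_of_natCast_eq_neg {r : ℕ} {i i' : Fin r}
    (h : ((i : ℕ) : ZMod r) = -((i' : ℕ) : ZMod r)) : i = i' ∨ (i : ℕ) + i' = r := by
  rw [eq_neg_iff_add_eq_zero, ← Nat.cast_add, ZMod.natCast_eq_zero_iff] at h
  obtain ⟨k, hk⟩ := h
  have : k < 2 := by
    by_contra! hk2
    nlinarith [i.isLt, i'.isLt, Nat.mul_le_mul_left r hk2]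
  interval_cases k
  · left; ext; omega
  · right; omega

theorem eq_or_eq_neg_of_units_smul_eq {G : Type*} [AddCommGroup G] {u u' : ℤˣ} {x y : G}
    (h : u • x = u' • y) : x = y ∨ (x = -y ∧ u ≠ u') := by
  rcases Int.units_eq_one_or u with rfl | rfl <;> rcases Int.units_eq_one_or u' with rfl | rfl <;>
    simp_all [neg_eq_iff_eq_neg]

theorem Fin.sum_natCast_eq_zero_of_odd {r : ℕ} (hodd : Odd r) :
    ∑ i : Fin r, ((i : ℕ) : ZMod r) = 0 := by
  obtain ⟨m, rfl⟩ := hodd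
  rw [Fin.sum_univ_eq_sum_range (fun i : ℕ => (i : ZMod (2 * m + 1))), ← Nat.cast_sum,
    ZMod.natCast_eq_zero_iff]
  have := sum_range_id_mul_two (2 * m + 1)
  rw [Nat.add_sub_cancel] at this
  exact ⟨m, by linarith⟩

theorem Finset.sum_units_smul_eq_zero {ι G : Type*} [AddCommGroup G] (s : Finset ι) (u : ι → ℤˣ)
    (hu : ∑ i ∈ s, (u i : ℤ) = 0) (x : G) : ∑ i ∈ s, u i • x = 0 := by
  simp only [Units.smul_def, ← sum_smul, hu, zero_smul]

structure MRSTemplate (H : Type*) [AddCommGroup H] (c b : ℕ) where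
  D₀ : Fin c → Fin b → H
  D₁ : Fin c → Fin b → H
  D₂ : Fin c → Fin b → H
  L : Fin c → Fin b → H
  sign : Fin b → ℤˣ
  injective_D₀ : Injective fun p : Fin c × Fin b => D₀ p.1 p.2
  injective_D₁ : Injective fun p : Fin c × Fin b => D₁ p.1 p.2
  injective_D₂ : Injective fun p : Fin c × Fin b => D₂ p.1 p.2
  injective_L : Injective fun p : Fin c × Fin b => L p.1 p.2
  sum_D₀ : ∀ t, ∑ j, D₀ t j = 0
  sum_D₁ : ∀ t, ∑ j, D₁ t j = 0
  sum_D₂ : ∀ t, ∑ j, D₂ t j = 0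
  sum_L : ∀ t, ∑ j, L t j = 0
  D₀_add_D₁_add_D₂ : ∀ t j, D₀ t j + D₁ t j + D₂ t j = 0
  sum_sign : ∑ j, (sign j : ℤ) = 0
  sign_eq_of_D₁_eq_D₂ : ∀ t j t' j', D₁ t j = D₂ t' j' → sign j = sign j'
  sign_eq_of_L_eq_neg_L : ∀ t j t' j', L t j = -L t' j' → sign j = sign j'

namespace MRSTemplate

variable {H : Type*} [AddCommGroup H] {c b : ℕ} (T : MRSTemplate H c b)

def row (r i : ℕ) : Fin c → Fin b → H :=
  if i = 0 then T.D₀ else if i = 1 then T.D₁ else if i = r - 1 then T.D₂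
  else if 2 * i < r then T.L else -T.L

variable {r i : ℕ}

@[simp] lemma row_zero : T.row r 0 = T.D₀ := by simp [row]

@[simp] lemma row_one : T.row r 1 = T.D₁ := by simp [row]

lemma row_sub_one (hr : 2 < r) : T.row r (r - 1) = T.D₂ := by
  rw [row, if_neg (by omega), if_neg (by omega), if_pos rfl]

lemma row_of_two_mul_lt (hi : 1 < i) (h : 2 * i < r) : T.row r i = T.L := by
  rw [row, if_neg (by omega), if_neg (by omega), if_neg (by omega), if_pos h]

lemma row_of_lt_two_mul (h : r < 2 * i) (hi : i < r - 1) : T.row r i = -T.L := by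
  rw [row, if_neg (by omega), if_neg (by omega), if_neg (by omega), if_neg (by omega)]

lemma injective_row (r i : ℕ) : Injective fun p : Fin c × Fin b => T.row r i p.1 p.2 := by
  unfold row
  split_ifs
  exacts [T.injective_D₀, T.injective_D₁, T.injective_D₂, T.injective_L,
    neg_injective.comp T.injective_L]

lemma sum_row (r i : ℕ) (t : Fin c) : ∑ j, T.row r i t j = 0 := by
  unfold row
  split_ifs
  exacts [T.sum_D₀ t, T.sum_D₁ t, T.sum_D₂ t, T.sum_L t,
    by simp only [Pi.neg_apply, sum_neg_distrib, T.sum_L t, neg_zero]]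

lemma sum_range_row (hr : 3 ≤ r) (hodd : Odd r) (t : Fin c) (j : Fin b) :
    ∑ i ∈ range r, T.row r i t j = 0 := by
  obtain ⟨n, hn⟩ : ∃ n, r = 2 * n + 3 := by obtain ⟨m, rfl⟩ := hodd; exact ⟨m - 1, by omega⟩
  have hlow : ∑ i ∈ range n, T.row r (i + 1 + 1) t j = n • T.L t j := by
    rw [sum_congr rfl fun i hi => by rw [T.row_of_two_mul_lt (by omega) (by simp at hi; omega)],
      sum_const, card_range]
  have hhigh : ∑ i ∈ range n, T.row r (n + 2 + i) t j = n • -T.L t j := by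
    rw [sum_congr rfl fun i hi => by rw [T.row_of_lt_two_mul (by omega) (by simp at hi; omega)],
      sum_const, card_range, Pi.neg_apply, Pi.neg_apply]
  rw [show r = (n + 2) + (n + 1) by omega, sum_range_add, sum_range_succ', sum_range_succ',
    sum_range_succ, ← show r = (n + 2) + (n + 1) by omega, hlow, hhigh,
    show n + 2 + n = r - 1 by omega, T.row_sub_one (by omega), zero_add, row_one, row_zero,
    smul_neg, ← T.D₀_add_D₁_add_D₂ t j]
  abel

lemma sign_eq_of_row_eq (hodd : Odd r) {i i' : ℕ} (hsum : i + i' = r) (hi : 0 < i) (hi' : 0 < i')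
    {t t' : Fin c} {j j' : Fin b} (h : T.row r i t j = T.row r i' t' j') :
    T.sign j = T.sign j' := by
  wlog hle : i ≤ i' generalizing i i' t t' j j'
  · exact (this (by omega) hi' hi h.symm (by omega)).symm
  obtain ⟨m, rfl⟩ := hodd
  obtain rfl | hi1 : i = 1 ∨ 1 < i := by omega
  · rw [row_one, show i' = 2 * m + 1 - 1 by omega, T.row_sub_one (by omega)] at h
    exact T.sign_eq_of_D₁_eq_D₂ _ _ _ _ h
  · rw [T.row_of_two_mul_lt hi1 (by omega), T.row_of_lt_two_mul (by omega) (by omega)] at h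
    exact T.sign_eq_of_L_eq_neg_L _ _ _ _ h

def array (r : ℕ) : Fin c → Fin r → Fin b → H × ZMod r :=
  fun t i j => (T.row r i t j, T.sign j • ((i : ℕ) : ZMod r))

lemma injective_array (hodd : Odd r) :
    Injective fun p : Fin c × Fin r × Fin b => T.array r p.1 p.2.1 p.2.2 := by
  rintro ⟨t, i, j⟩ ⟨t', i', j'⟩ h
  simp only [array, Prod.mk.injEq] at h
  obtain ⟨hrow, hsmul⟩ := h
  obtain rfl | ⟨hsum, hsign⟩ : i = i' ∨ ((i : ℕ) + i' = r ∧ T.sign j ≠ T.sign j') := by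
    rcases eq_or_eq_neg_of_units_smul_eq hsmul with h | ⟨h, hsign⟩
    · exact .inl (Fin.eq_of_natCast_eq h)
    · exact (Fin.eq_or_add_eq_of_natCast_eq_neg h).imp_right (⟨·, hsign⟩)
  · obtain ⟨rfl, rfl⟩ := Prod.mk.inj (T.injective_row r i (a₁ := (t, j)) (a₂ := (t', j')) hrow)
    rfl
  · exact absurd (T.sign_eq_of_row_eq hodd hsum (by omega) (by omega) hrow) hsign

lemma isZeroSumFullMRS_array [Fintype H] (hcard : Fintype.card H = c * b) (hr : 3 ≤ r)
    (hodd : Odd r) : IsZeroSumFullMRS r b c (T.array r) := by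
  have : NeZero r := ⟨by omega⟩
  refine ⟨(Fintype.bijective_iff_injective_and_card _).2 ⟨T.injective_array hodd, ?_⟩,
    fun t i => Prod.ext ?_ ?_, fun t j => Prod.ext ?_ ?_⟩
  · simp only [Fintype.card_prod, Fintype.card_fin, hcard, ZMod.card]
    ring
  · rw [Prod.fst_sum]
    exact T.sum_row r i t
  · rw [Prod.snd_sum]
    exact sum_units_smul_eq_zero _ _ T.sum_sign _
  · rw [Prod.fst_sum]
    exact (Fin.sum_univ_eq_sum_range (fun i => T.row r i t j) r).trans
      (T.sum_range_row hr hodd t j)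
  · rw [Prod.snd_sum]
    simp only [array, ← smul_sum, Fin.sum_natCast_eq_zero_of_odd hodd, smul_zero, Prod.snd_zero]

end MRSTemplate

def template16 : MRSTemplate (ZMod 2 × ZMod 2 × ZMod 4) 2 8 where
  D₀ := ![![(1,1,1),(1,0,3),(0,1,1),(1,0,2),(1,1,3),(1,0,1),(0,0,1),(1,1,0)],
    ![(0,1,2),(0,1,0),(0,1,3),(1,1,2),(0,0,2),(0,0,3),(1,0,0),(0,0,0)]]
  D₁ := ![![(0,1,1),(1,1,0),(1,1,3),(1,0,2),(0,1,0),(1,0,1),(0,0,2),(0,0,3)],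
    ![(1,0,3),(1,0,0),(1,1,2),(0,0,0),(0,1,2),(0,1,3),(1,1,1),(0,0,1)]]
  D₂ := ![![(1,0,2),(0,1,1),(1,0,0),(0,0,0),(1,0,1),(0,0,2),(0,0,1),(1,1,1)],
    ![(1,1,3),(1,1,0),(1,0,3),(1,1,2),(0,1,0),(0,1,2),(0,1,3),(0,0,3)]]
  L := ![![(0,0,0),(0,1,0),(1,1,2),(0,1,2),(1,0,3),(0,1,1),(0,0,1),(0,0,3)],
    ![(1,1,0),(1,0,2),(1,0,0),(0,0,2),(1,0,1),(0,1,3),(1,1,1),(1,1,3)]]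
  sign j := if (j : ℕ) < 4 then 1 else -1
  injective_D₀ := by decide
  injective_D₁ := by decide
  injective_D₂ := by decide
  injective_L := by decide
  sum_D₀ := by decide
  sum_D₁ := by decide
  sum_D₂ := by decide
  sum_L := by decide
  D₀_add_D₁_add_D₂ := by decide
  sum_sign := by decide
  sign_eq_of_D₁_eq_D₂ := by decide
  sign_eq_of_L_eq_neg_L := by decide

/-- Let `r ≥ 3` be an odd integer and let `Γ = Z_{2r} ⊕ Z_2 ⊕ Z_4`. Then there exists a zero-sum
`MRS_Γ(r,8;2)`. -/
theorem stmt9 (r : ℕ) (hr : 3 ≤ r) (hodd : Odd r) :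
    ∃ A : Fin 2 → Fin r → Fin 8 → ZMod (2 * r) × ZMod 2 × ZMod 4,
      IsZeroSumFullMRS r 8 2 A :=
  ⟨_, (template16.isZeroSumFullMRS_array rfl hr hodd).map_s9 (zmodTwoMulProdEquiv hodd _).symm⟩
end

section
/- Let b, n, c be positive integers such that 2 ≤ 2b ≤ n, and let Γ be a finite abelian group of order 2·n·b·c. If Γ contains an element of order n, then there exists a diagonal Γ-magic rectangle set MRS_Γ(n;2b;c). -/
/-!
An element of order `n` gives an embedding `ψ : ZMod n →+ Γ`; let `H` be its image. The quotient
`Γ ⧸ H` has even order `2bc`, so doubling on it is not surjective: some class `s` is not of the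
form `q + q`. Then `q ↦ s - q` is a fixed-point-free involution of `Γ ⧸ H`, whose `bc` orbits we
index by `(t, r) ∈ Fin c × Fin b`, with representatives `τ (t, r)`. Lift `τ (t, r)` to `ρ (t, r)`
and `s` to `w`. In the array `t`, the cell of row `i` on diagonal `r` carries `ρ (t, r) + ψ i`, and
the cell of row `i` on diagonal `r + b` carries `w - ρ (t, r) - ψ i`. Each row then sums to `b • w`
and each column to `b • (w + ψ b)`. For a fixed row `i`, the classes modulo `H` of the entries of
all arrays run once through `Γ ⧸ H`, and `ψ i` runs through `H` with `i`, so every element of `Γ`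
occurs exactly once.
-/

open Finset

/-- A diagonal Γ-magic rectangle set `MRS_Γ(n;k;c)`: the filled cells of each array are
exactly those of `k` consecutive diagonals (indices mod `n`). -/
def IsDiagonalMRS {Γ : Type*} [AddCommGroup Γ] (n k c : ℕ)
    (A : Fin c → Fin n → Fin n → Option Γ) : Prop :=
  IsPartialMRS n n k k c A ∧
  ∀ t : Fin c, ∃ ℓ : ZMod n, ∀ i j : Fin n,
    (A t i j).isSome = true ↔
      ∃ u : ℕ, u < k ∧ ((j : ℕ) : ZMod n) - ((i : ℕ) : ZMod n) = ℓ + (u : ZMod n)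

open Function

theorem existsUnique_eq_some_of_injective_of_card {α β : Type*} [Fintype α] [Fintype β]
    (A : α → Option β)
    (hinj : ∀ a a' b, A a = some b → A a' = some b → a = a')
    (hcard : #(univ.filter fun a => (A a).isSome) = Fintype.card β) (b : β) :
    ∃! a, A a = some b := by
  let f : {a // (A a).isSome} → β := fun a => (A a).get a.2
  have hf : Bijective f := by
    refine (Fintype.bijective_iff_injective_and_card f).mpr ⟨fun a a' h => ?_, ?_⟩
    · exact Subtype.ext
        (hinj a a' (f a) (Option.eq_some_of_isSome a.2) (h ▸ Option.eq_some_of_isSome a'.2))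
    · rw [Fintype.card_subtype, hcard]
  obtain ⟨a, ha⟩ := hf.surjective b
  have hab : A a = some b := ha ▸ Option.eq_some_of_isSome a.2
  exact ⟨a, hab, fun a' h' => hinj _ _ _ h' hab⟩

section ZModCast

variable {n : ℕ} [NeZero n]

theorem bijective_natCast_fin : Bijective fun i : Fin n => ((i : ℕ) : ZMod n) := by
  refine (Fintype.bijective_iff_injective_and_card _).mpr ⟨fun i j h => Fin.ext ?_, by simp⟩
  simpa [ZMod.val_cast_of_lt i.isLt, ZMod.val_cast_of_lt j.isLt] using congrArg ZMod.val h

variable {M : Type*} [AddCommMonoid M]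

theorem sum_fin_natCast (f : ZMod n → M) : ∑ i : Fin n, f (i : ℕ) = ∑ x, f x :=
  Fintype.sum_bijective _ bijective_natCast_fin _ _ fun _ => rfl

theorem sum_dite_val_lt {k : ℕ} (hk : k ≤ n) (F : ZMod n → Fin k → M) :
    ∑ d : ZMod n, (if h : d.val < k then F d ⟨d.val, h⟩ else 0) = ∑ m : Fin k, F (m : ℕ) m := by
  have hval (m : Fin k) : ((m : ℕ) : ZMod n).val = m := ZMod.val_cast_of_lt (m.isLt.trans_le hk)
  symm
  refine Fintype.sum_of_injective (fun m : Fin k => ((m : ℕ) : ZMod n)) (fun m m' h => ?_) _ _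
    (fun d hd => dif_neg fun h => hd ⟨⟨d.val, h⟩, ZMod.natCast_zmod_val d⟩) (fun m => ?_)
  · exact Fin.ext (by simpa [hval] using congrArg ZMod.val h)
  · simp only [hval, m.isLt, dite_true]

end ZModCast

section DiagArray

variable {Γ : Type*} {n c k : ℕ}

/-- The array whose `t`-th layer carries `E t i m` in the cell `(i, i + m)` (mod `n`) for every `m < k`. -/
def diagArray (k : ℕ) (E : Fin c → ZMod n → Fin k → Γ) (t : Fin c) (i j : Fin n) : Option Γ :=
  if h : (((j : ℕ) : ZMod n) - ((i : ℕ) : ZMod n)).val < k then some (E t (i : ℕ) ⟨_, h⟩)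
  else none

variable (E : Fin c → ZMod n → Fin k → Γ)

theorem isSome_diagArray (t : Fin c) (i j : Fin n) :
    (diagArray k E t i j).isSome ↔ (((j : ℕ) : ZMod n) - ((i : ℕ) : ZMod n)).val < k := by
  unfold diagArray; split_ifs with h <;> simpa using h

variable [NeZero n] {M : Type*} [AddCommMonoid M] {φ : Option Γ → M}

theorem sum_diagArray_row (hφ : φ none = 0) (hk : k ≤ n) (t : Fin c) (i : Fin n) :
    ∑ j, φ (diagArray k E t i j) = ∑ m : Fin k, φ (some (E t (i : ℕ) m)) := by
  let G (d : ZMod n) : M := if h : d.val < k then φ (some (E t (i : ℕ) ⟨d.val, h⟩)) else 0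
  have hG (j : Fin n) : φ (diagArray k E t i j) = G ((j : ℕ) - (i : ℕ)) := by
    unfold diagArray G; split_ifs <;> simp [hφ]
  simp only [hG]
  rw [sum_fin_natCast (fun y => G (y - ((i : ℕ) : ZMod n)))]
  exact (Fintype.sum_equiv (Equiv.subRight _) _ G fun _ => rfl).trans
    (sum_dite_val_lt hk fun _ m => φ (some (E t (i : ℕ) m)))

theorem sum_diagArray_col (hφ : φ none = 0) (hk : k ≤ n) (t : Fin c) (j : Fin n) :
    ∑ i, φ (diagArray k E t i j) = ∑ m : Fin k, φ (some (E t ((j : ℕ) - (m : ℕ)) m)) := by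
  let G (d : ZMod n) : M :=
    if h : d.val < k then φ (some (E t ((j : ℕ) - d) ⟨d.val, h⟩)) else 0
  have hG (i : Fin n) : φ (diagArray k E t i j) = G ((j : ℕ) - (i : ℕ)) := by
    unfold diagArray G; split_ifs <;> simp [hφ]
  simp only [hG]
  rw [sum_fin_natCast (fun x => G (((j : ℕ) : ZMod n) - x))]
  exact (Fintype.sum_equiv (Equiv.subLeft _) _ G fun _ => rfl).trans
    (sum_dite_val_lt hk fun d m => φ (some (E t ((j : ℕ) - d) m)))

theorem card_filter_isSome_diagArray_row (hk : k ≤ n) (t : Fin c) (i : Fin n) :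
    #(univ.filter fun j => (diagArray k E t i j).isSome) = k := by
  rw [card_filter, sum_diagArray_row E (φ := fun o => if o.isSome then 1 else 0) rfl hk]
  simp

theorem card_filter_isSome_diagArray_col (hk : k ≤ n) (t : Fin c) (j : Fin n) :
    #(univ.filter fun i => (diagArray k E t i j).isSome) = k := by
  rw [card_filter, sum_diagArray_col E (φ := fun o => if o.isSome then 1 else 0) rfl hk]
  simp

theorem card_filter_isSome_diagArray (hk : k ≤ n) :
    #(univ.filter fun p : Fin c × Fin n × Fin n => (diagArray k E p.1 p.2.1 p.2.2).isSome) =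
      c * n * k := by
  rw [card_filter]
  simp_rw [Fintype.sum_prod_type, ← card_filter, card_filter_isSome_diagArray_row E hk]
  simp [mul_assoc]

theorem eq_of_diagArray_eq_some
    (hE : Injective fun p : Fin c × ZMod n × Fin k => E p.1 p.2.1 p.2.2)
    {t t' : Fin c} {i i' j j' : Fin n} {γ : Γ} (h : diagArray k E t i j = some γ)
    (h' : diagArray k E t' i' j' = some γ) : (t, i, j) = (t', i', j') := by
  unfold diagArray at h h'
  split_ifs at h h' with hd hd'
  have := @hE (t, _, ⟨_, hd⟩) (t', _, ⟨_, hd'⟩) (Option.some_injective _ (h.trans h'.symm))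
  simp only [Prod.mk.injEq, Fin.mk.injEq] at this
  obtain ⟨rfl, hi, hm⟩ := this
  obtain rfl := bijective_natCast_fin.injective hi
  rw [bijective_natCast_fin.injective (sub_left_inj.mp (ZMod.val_injective n hm))]

variable [AddCommGroup Γ]

theorem isDiagonalMRS_diagArray [Fintype Γ] (hk : k ≤ n) (hcard : Fintype.card Γ = c * n * k)
    (hE : Injective fun p : Fin c × ZMod n × Fin k => E p.1 p.2.1 p.2.2) {ω δ : Γ}
    (hrow : ∀ t x, ∑ m, E t x m = ω) (hcol : ∀ t y, ∑ m : Fin k, E t (y - (m : ℕ)) m = δ) :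
    IsDiagonalMRS n k c (diagArray k E) := by
  refine ⟨⟨existsUnique_eq_some_of_injective_of_card _
      (fun _ _ _ h h' => eq_of_diagArray_eq_some E hE h h')
      ((card_filter_isSome_diagArray E hk).trans hcard.symm),
    card_filter_isSome_diagArray_row E hk, card_filter_isSome_diagArray_col E hk, ω, δ,
    fun t i => ?_, fun t j => ?_⟩, fun t => ⟨0, fun i j => ?_⟩⟩
  · exact (sum_diagArray_row E (φ := (·.getD 0)) rfl hk t i).trans (hrow t _)
  · exact (sum_diagArray_col E (φ := (·.getD 0)) rfl hk t j).trans (hcol t _)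
  · simp only [isSome_diagArray, zero_add]
    constructor
    · exact fun h => ⟨_, h, (ZMod.natCast_zmod_val _).symm⟩
    · rintro ⟨u, hu, h⟩
      rwa [h, ZMod.val_cast_of_lt (hu.trans_le hk)]

end DiagArray

theorem exists_forall_add_self_ne {Q : Type*} [AddCommGroup Q] [Finite Q]
    (h : Even (Nat.card Q)) :
    ∃ s : Q, ∀ q : Q, q + q ≠ s := by
  have : Fact (Nat.Prime 2) := ⟨Nat.prime_two⟩
  obtain ⟨x, hx⟩ := exists_prime_addOrderOf_dvd_card' 2 (even_iff_two_dvd.mp h)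
  have hx0 : x ≠ 0 := by rintro rfl; simp at hx
  have hxx : x + x = 0 + 0 := by rw [← two_nsmul, ← hx, addOrderOf_nsmul_eq_zero, add_zero]
  have hdouble : ¬ Surjective fun q : Q => q + q :=
    fun hs => hx0 (Finite.injective_iff_surjective.mpr hs hxx)
  simpa [Surjective] using hdouble

theorem exists_injective_add_ne {Q α : Type*} [AddCommGroup Q] [Finite Q] [Finite α]
    (h : Nat.card Q = 2 * Nat.card α) :
    ∃ s : Q, ∃ τ : α → Q, Injective τ ∧ ∀ a a', τ a + τ a' ≠ s := by
  classical
  have := Fintype.ofFinite Q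
  have := Fintype.ofFinite α
  obtain ⟨s, hs⟩ := exists_forall_add_self_ne (Q := Q) (h ▸ even_two_mul _)
  -- any total order splits each pair `{q, s - q}`; `T` takes its smaller element
  let e := Fintype.equivFin Q
  let T : Finset Q := univ.filter fun q => e q < e (s - q)
  have hT : ∀ q, q ∈ T ↔ s - q ∉ T := by
    intro q
    have hne : e q ≠ e (s - q) := fun heq => hs q (by nth_rw 2 [e.injective heq]; abel)
    simp only [T, mem_filter, mem_univ, true_and, sub_sub_cancel, not_lt]
    exact ⟨le_of_lt, fun hle => lt_of_le_of_ne hle hne⟩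
  have hTcard : Fintype.card T = Fintype.card α := by
    have hcompl : #T = #Tᶜ := card_nbij' (s - ·) (s - ·)
      (fun q hq => by simpa using (hT q).mp hq)
      (fun q hq => by simpa [hT q] using hq)
      (fun q _ => sub_sub_cancel s q) (fun q _ => sub_sub_cancel s q)
    have := card_add_card_compl T
    rw [Nat.card_eq_fintype_card, Nat.card_eq_fintype_card] at h
    rw [Fintype.card_coe]
    omega
  let f : α ≃ T := (Fintype.equivOfCardEq hTcard).symm
  refine ⟨s, fun a => (f a : Q), Subtype.val_injective.comp f.injective, fun a a' hsum => ?_⟩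
  have h1 : (f a' : Q) = s - f a := by rw [← hsum, add_sub_cancel_left]
  exact (hT (f a)).mp (f a).2 (h1 ▸ (f a').2)

theorem exists_injective_zmod_addOrderOf {Γ : Type*} [AddCommGroup Γ] (g : Γ) :
    ∃ ψ : ZMod (addOrderOf g) →+ Γ, Injective ψ :=
  ⟨ZMod.lift _ ⟨zmultiplesHom Γ g, by simp [addOrderOf_nsmul_eq_zero]⟩,
    (ZMod.lift_injective _).mpr fun m hm => (ZMod.intCast_zmod_eq_zero_iff_dvd _ _).mpr
      (addOrderOf_dvd_iff_zsmul_eq_zero.mpr (by simpa using hm))⟩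

theorem card_quotient_range_mul {Γ : Type*} [AddCommGroup Γ] {n : ℕ} {ψ : ZMod n →+ Γ}
    (hψ : Injective ψ) : Nat.card (Γ ⧸ ψ.range) * n = Nat.card Γ := by
  rw [AddSubgroup.card_eq_card_quotient_mul_card_addSubgroup ψ.range,
    ← Nat.card_congr (AddMonoidHom.ofInjective hψ).toEquiv, Nat.card_zmod]

theorem injective_pair_sub_of_add_ne {Q α : Type*} [AddCommGroup Q] {s : Q} {τ : α → Q}
    (hτ : Injective τ) (hτs : ∀ a a', τ a + τ a' ≠ s) :
    Injective fun q : Fin 2 × α => ![τ q.2, s - τ q.2] q.1 := by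
  rintro ⟨ε, a⟩ ⟨ε', a'⟩ h
  fin_cases ε <;> fin_cases ε' <;> simp at h
  · rw [hτ h]
  · exact absurd (eq_sub_iff_add_eq.mp h) (hτs a a')
  · exact absurd (eq_sub_iff_add_eq.mp h.symm) (hτs a' a)
  · rw [hτ h]

section PairedEntry

variable {Γ : Type*} [AddCommGroup Γ] {n b c : ℕ} (ψ : ZMod n →+ Γ) (w : Γ)
  (ρ : Fin c × Fin b → Γ)

/-- The entry in row `x` of array `t` on the diagonal `r + b * ε`, where `p = (ε, r)`; the two
entries attached to `ρ (t, r)` sum to `w`. -/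
def pairedEntry (t : Fin c) (x : ZMod n) (p : Fin 2 × Fin b) : Γ :=
  ![ρ (t, p.2) + ψ x, w - ρ (t, p.2) - ψ x] p.1

theorem sum_pairedEntry_row (t : Fin c) (x : ZMod n) :
    ∑ m : Fin (2 * b), pairedEntry ψ w ρ t x (finProdFinEquiv.symm m) = b • w := by
  rw [finProdFinEquiv.symm.sum_comp, Fintype.sum_prod_type, Fin.sum_univ_two, ← sum_add_distrib]
  simp [pairedEntry]

theorem sum_pairedEntry_col (t : Fin c) (y : ZMod n) :
    ∑ m : Fin (2 * b), pairedEntry ψ w ρ t (y - (m : ℕ)) (finProdFinEquiv.symm m) =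
      b • (w + ψ b) := by
  rw [← finProdFinEquiv.sum_comp, Fintype.sum_prod_type, Fin.sum_univ_two, ← sum_add_distrib]
  simp only [Equiv.symm_apply_apply, finProdFinEquiv_apply_val]
  refine (Fintype.sum_congr _ (fun _ => w + ψ b) fun r => ?_).trans (by simp)
  simp only [pairedEntry, Fin.val_zero, Fin.val_one, Matrix.cons_val_zero, Matrix.cons_val_one,
    Matrix.cons_val_fin_one]
  push_cast
  simp only [mul_zero, add_zero, mul_one, map_sub, map_add]
  abel

theorem injective_pairedEntry (hψ : Injective ψ) {s : Γ ⧸ ψ.range}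
    {τ : Fin c × Fin b → Γ ⧸ ψ.range} (hτ : Injective τ) (hτs : ∀ a a', τ a + τ a' ≠ s)
    (hw : (w : Γ ⧸ ψ.range) = s) (hρ : ∀ a, (ρ a : Γ ⧸ ψ.range) = τ a) :
    Injective fun q : Fin c × ZMod n × Fin (2 * b) =>
      pairedEntry ψ w ρ q.1 q.2.1 (finProdFinEquiv.symm q.2.2) := by
  have hψ0 (x : ZMod n) : ((ψ x : Γ) : Γ ⧸ ψ.range) = 0 :=
    (QuotientAddGroup.eq_zero_iff _).mpr ⟨x, rfl⟩
  have hclass (t x p) :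
      ((pairedEntry ψ w ρ t x p : Γ) : Γ ⧸ ψ.range) = ![τ (t, p.2), s - τ (t, p.2)] p.1 := by
    obtain ⟨ε, r⟩ := p
    fin_cases ε <;> simp [pairedEntry, hψ0, hρ, hw]
  suffices h : Injective fun q : Fin c × ZMod n × (Fin 2 × Fin b) =>
      pairedEntry ψ w ρ q.1 q.2.1 q.2.2 by
    exact h.comp (injective_id.prodMap (injective_id.prodMap finProdFinEquiv.symm.injective))
  rintro ⟨t, x, ε, r⟩ ⟨t', x', ε', r'⟩ h
  have := @injective_pair_sub_of_add_ne _ _ _ _ _ hτ hτs (ε, t, r) (ε', t', r')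
    (by simpa only [hclass] using congrArg (QuotientAddGroup.mk (s := ψ.range)) h)
  simp only [Prod.mk.injEq] at this
  obtain ⟨rfl, rfl, rfl⟩ := this
  have : ψ x = ψ x' := by fin_cases ε <;> simpa [pairedEntry] using h
  rw [hψ this]

end PairedEntry

theorem stmt12_general (b n c : ℕ) (hn : 2 * b ≤ n)
    (Γ : Type*) [AddCommGroup Γ] [Fintype Γ] (hcard : Fintype.card Γ = 2 * n * b * c)
    (hg : ∃ g : Γ, addOrderOf g = n) :
    ∃ A : Fin c → Fin n → Fin n → Option Γ, IsDiagonalMRS n (2 * b) c A := by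
  obtain ⟨g, rfl⟩ := hg
  have : NeZero (addOrderOf g) := ⟨(addOrderOf_pos g).ne'⟩
  obtain ⟨ψ, hψ⟩ := exists_injective_zmod_addOrderOf g
  have hQ : Nat.card (Γ ⧸ ψ.range) = 2 * Nat.card (Fin c × Fin b) := by
    refine Nat.eq_of_mul_eq_mul_right (addOrderOf_pos g) ?_
    rw [card_quotient_range_mul hψ, Nat.card_eq_fintype_card, hcard]
    simp only [Nat.card_eq_fintype_card, Fintype.card_prod, Fintype.card_fin]
    ring
  obtain ⟨s, τ, hτ, hτs⟩ := exists_injective_add_ne hQ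
  let ρ a := (τ a).out
  have hE := injective_pairedEntry ψ s.out ρ hψ hτ hτs (QuotientAddGroup.out_eq' s)
    fun a => QuotientAddGroup.out_eq' (τ a)
  exact ⟨_, isDiagonalMRS_diagArray _ hn (by rw [hcard]; ring) hE
    (sum_pairedEntry_row ψ s.out ρ) (sum_pairedEntry_col ψ s.out ρ)⟩

/-- Let `2 ≤ 2b ≤ n` and let `Γ` be an abelian group of order `2·n·b·c`. If `Γ` contains an
element of order `n`, then there exists a diagonal `MRS_Γ(n;2b;c)`. -/
theorem stmt12 (b n c : ℕ) (hb : 0 < b) (hn : 2 * b ≤ n) (hbn : 2 ≤ 2 * b) (hc : 0 < c)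
    (Γ : Type*) [AddCommGroup Γ] [Fintype Γ] (hcard : Fintype.card Γ = 2 * n * b * c)
    (hg : ∃ g : Γ, addOrderOf g = n) :
    ∃ A : Fin c → Fin n → Fin n → Option Γ, IsDiagonalMRS n (2 * b) c A :=
  stmt12_general b n c hn Γ hcard hg
end
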